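/- Let (M, ρ) be a metric space and T = (M, E) a tree all of whose edge lengths are positive with ρ(T) < ∞. Then T is a minimal spanning tree on (M, ρ) if and only if ρ^T_∞ ≤ ρ, where ρ^T_∞(v, w) = max{ρ(e) : e an edge of the path in T from v to w} (and 0 if v = w). -/

import Mathlib

/-!
Deleting an edge `ab` from a tree splits it into two sides, and adding any edge `xy` that joins
them gives a tree again; `xy` joins them exactly when `ab` lies on the tree path from `x` to `y`.

If `T` is minimal, exchanging an edge `ab` on the `T`-path from `x` to `y` for `xy` cannot
shorten `T`, so `ρ(a, b) ≤ ρ(x, y)`. Conversely, let `ρ^T_∞ ≤ ρ` and let `T'` be a spanning tree.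
An edge `ab` of `T` missing from `T'` can be exchanged in `T'` for an edge `xy ∉ T` of `T'`
crossing the cut of `T - ab`; then `ab` lies on the `T`-path from `x` to `y`, so the exchange
does not make `T'` longer. Repeating this moves any finite set of edges of `T` into a spanning
tree no longer than `T'`, and `ρ(T)` is the supremum of the lengths of such finite sets.
-/

open scoped ENNReal

namespace MSTPaper

variable {M : Type*}

/-- The length of an edge `e` of a graph on a metric space: the extended
distance between its endpoints. -/
noncomputable def edgeLen [MetricSpace M] (e : Sym2 M) : ℝ≥0∞ :=
  Sym2.lift ⟨fun x y => edist x y, fun x y => edist_comm x y⟩ e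

/-- The length of a graph: the (possibly infinite) sum of the lengths of its edges. -/
noncomputable def graphLen [MetricSpace M] (G : SimpleGraph M) : ℝ≥0∞ :=
  ∑' e : G.edgeSet, edgeLen (e : Sym2 M)

/-- The distance between two subsets of a metric space. -/
noncomputable def setDist [MetricSpace M] (A B : Set M) : ℝ≥0∞ :=
  ⨅ x ∈ A, ⨅ y ∈ B, edist x y

/-- A minimal spanning tree on the metric space `M`: a spanning tree of finite
length whose length equals the infimum of lengths of all spanning trees on `M`. -/
def IsMST [MetricSpace M] (T : SimpleGraph M) : Prop :=
  T.IsTree ∧ graphLen T < ⊤ ∧ ∀ T' : SimpleGraph M, T'.IsTree → graphLen T ≤ graphLen T'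

/-- An edge `uv` of `G` is exact if its length equals the distance between the
two connected components obtained by removing it. -/
def ExactEdge [MetricSpace M] (G : SimpleGraph M) (u v : M) : Prop :=
  edist u v = setDist {x | (G.deleteEdges {s(u,v)}).Reachable u x}
                      {x | (G.deleteEdges {s(u,v)}).Reachable v x}

end MSTPaper

namespace SimpleGraph

variable {V : Type*} {G : SimpleGraph V}

lemma Walk.reachable_deleteEdges_or (a b : V) {u v : V} (w : G.Walk u v)
    (hu : (G.deleteEdges {s(a, b)}).Reachable a u ∨ (G.deleteEdges {s(a, b)}).Reachable b u) :
    (G.deleteEdges {s(a, b)}).Reachable a v ∨ (G.deleteEdges {s(a, b)}).Reachable b v := by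
  induction w with
  | nil => exact hu
  | @cons u w v huw _ ih =>
    apply ih
    by_cases he : s(u, w) = s(a, b)
    · rcases Sym2.eq_iff.mp he with ⟨-, rfl⟩ | ⟨-, rfl⟩
      exacts [.inr .rfl, .inl .rfl]
    · have hD : (G.deleteEdges {s(a, b)}).Adj u w := deleteEdges_adj.mpr ⟨huw, he⟩
      exact hu.imp (·.trans hD.reachable) (·.trans hD.reachable)

lemma Connected.reachable_deleteEdges_or (hG : G.Connected) (a b v : V) :
    (G.deleteEdges {s(a, b)}).Reachable a v ∨ (G.deleteEdges {s(a, b)}).Reachable b v :=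
  (hG.preconnected a v).some.reachable_deleteEdges_or a b (.inl .rfl)

lemma IsAcyclic.not_reachable_deleteEdges_of_mem_edges (hG : G.IsAcyclic) {u v a b : V}
    (p : G.Path u v) (hab : s(a, b) ∈ p.1.edges) :
    ¬ (G.deleteEdges {s(a, b)}).Reachable u v := by
  classical
  rw [reachable_deleteEdges_iff_exists_walk]
  rintro ⟨q, hq⟩
  have : p = q.toPath := (hG.subsingleton_path u v).elim _ _
  exact hq (q.edges_toPath_subset_edges (this ▸ hab))

lemma IsTree.deleteEdges_sup_edge (hG : G.IsTree) {a b u v : V}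
    (huv : ¬ (G.deleteEdges {s(a, b)}).Reachable u v) :
    (G.deleteEdges {s(a, b)} ⊔ edge u v).IsTree := by
  set D := G.deleteEdges {s(a, b)}
  have hle : D ≤ D ⊔ edge u v := le_sup_left
  have hsides : (D.Reachable a u ∧ D.Reachable b v) ∨ (D.Reachable b u ∧ D.Reachable a v) := by
    rcases hG.connected.reachable_deleteEdges_or a b u with hu | hu <;>
    rcases hG.connected.reachable_deleteEdges_or a b v with hv | hv
    exacts [(huv (hu.symm.trans hv)).elim, .inl ⟨hu, hv⟩, .inr ⟨hu, hv⟩,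
      (huv (hu.symm.trans hv)).elim]
  have hedge : (D ⊔ edge u v).Adj u v :=
    Or.inr ((edge_adj ..).mpr ⟨.inl ⟨rfl, rfl⟩, by rintro rfl; exact huv .rfl⟩)
  have hab : (D ⊔ edge u v).Reachable a b := by
    rcases hsides with ⟨hu, hv⟩ | ⟨hu, hv⟩
    · exact (hu.mono hle).trans (hedge.reachable.trans (hv.mono hle).symm)
    · exact (hv.mono hle).trans (hedge.reachable.symm.trans (hu.mono hle).symm)
  refine ⟨(connected_iff_exists_forall_reachable _).mpr ⟨a, fun z => ?_⟩,
    (hG.isAcyclic.anti (deleteEdges_le _)).sup_edge_of_not_reachable huv⟩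
  rcases hG.connected.reachable_deleteEdges_or a b z with hz | hz
  exacts [hz.mono hle, hab.trans (hz.mono hle)]

lemma IsTree.deleteEdges_sup_edge_of_mem_edges (hG : G.IsTree) {u v a b : V}
    (p : G.Path u v) (hab : s(a, b) ∈ p.1.edges) :
    (G.deleteEdges {s(a, b)} ⊔ edge u v).IsTree :=
  hG.deleteEdges_sup_edge (hG.isAcyclic.not_reachable_deleteEdges_of_mem_edges p hab)

end SimpleGraph

namespace MSTPaper

variable {M : Type*}

open SimpleGraph

section

variable [MetricSpace M]

lemma edgeLen_mk (a b : M) : edgeLen s(a, b) = edist a b := rfl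

lemma graphLen_deleteEdges_add {G : SimpleGraph M} {a b : M} (h : G.Adj a b) :
    graphLen (G.deleteEdges {s(a, b)}) + edist a b = graphLen G := by
  have hsplit : G.edgeSet = (G.deleteEdges {s(a, b)}).edgeSet ∪ {s(a, b)} := by
    rw [edgeSet_deleteEdges, Set.sdiff_union_self, Set.union_singleton,
      Set.insert_eq_of_mem (G.mem_edgeSet.mpr h)]
  rw [graphLen, graphLen, hsplit, ENNReal.summable.tsum_union_disjoint (by simp) ENNReal.summable,
    tsum_singleton, edgeLen_mk]

lemma graphLen_sup_edge_le (G : SimpleGraph M) (x y : M) :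
    graphLen (G ⊔ edge x y) ≤ graphLen G + edist x y :=
  calc graphLen (G ⊔ edge x y)
      ≤ ∑' e : ↑(G.edgeSet ∪ {s(x, y)}), edgeLen (e : Sym2 M) :=
        ENNReal.tsum_mono_subtype _ (by
          rw [edgeSet_sup]; exact Set.union_subset_union_right _ edgeSet_edge_subset)
    _ ≤ graphLen G + ∑' e : ({s(x, y)} : Set (Sym2 M)), edgeLen (e : Sym2 M) :=
        ENNReal.tsum_union_le _ _ _
    _ = graphLen G + edist x y := by rw [tsum_singleton, edgeLen_mk]

lemma sum_edgeLen_le_graphLen {G : SimpleGraph M} {F : Finset (Sym2 M)}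
    (hF : ↑F ⊆ G.edgeSet) : ∑ e ∈ F, edgeLen e ≤ graphLen G := by
  rw [← Finset.tsum_subtype]
  exact ENNReal.tsum_mono_subtype _ hF

lemma graphLen_le_of_forall_sum_le {G : SimpleGraph M} {c : ℝ≥0∞}
    (h : ∀ F : Finset (Sym2 M), ↑F ⊆ G.edgeSet → ∑ e ∈ F, edgeLen e ≤ c) : graphLen G ≤ c := by
  rw [graphLen, ENNReal.tsum_eq_iSup_sum]
  refine iSup_le fun F => ?_
  simpa using h (F.map (Function.Embedding.subtype _)) (by simp)

/-- The paper's condition `ρ^T_∞ ≤ ρ`. -/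
def RhoInftyLe (T : SimpleGraph M) : Prop :=
  ∀ x y : M, ∀ p : T.Path x y, ∀ a b : M, s(a, b) ∈ p.1.edges → edist a b ≤ edist x y

lemma IsMST.rhoInftyLe {T : SimpleGraph M} (h : IsMST T) : RhoInftyLe T := by
  intro x y p a b hab
  set D := T.deleteEdges {s(a, b)}
  have hsplit : graphLen D + edist a b = graphLen T :=
    graphLen_deleteEdges_add (p.1.adj_of_mem_edges hab)
  have hD : graphLen D ≠ ⊤ := ne_top_of_le_ne_top h.2.1.ne (hsplit ▸ le_self_add)
  rw [← ENNReal.add_le_add_iff_left hD]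
  calc graphLen D + edist a b = graphLen T := hsplit
    _ ≤ graphLen (D ⊔ edge x y) := h.2.2 _ (h.1.deleteEdges_sup_edge_of_mem_edges p hab)
    _ ≤ graphLen D + edist x y := graphLen_sup_edge_le _ _ _

lemma RhoInftyLe.exists_exchange {T T' : SimpleGraph M} (hT : T.IsTree) (hρ : RhoInftyLe T)
    (hT' : T'.IsTree) {a b : M} (hab : T.Adj a b) (hab' : ¬ T'.Adj a b) :
    ∃ x y : M, T'.Adj x y ∧ ¬ T.Adj x y ∧ edist a b ≤ edist x y ∧
      (T'.deleteEdges {s(x, y)} ⊔ edge a b).IsTree := by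
  set D := T.deleteEdges {s(a, b)}
  obtain ⟨q, hq⟩ := hT'.connected.exists_isPath a b
  have hb : ¬ D.Reachable a b :=
    hT.isAcyclic.not_reachable_deleteEdges_of_mem_edges (Path.singleton hab) (by simp)
  obtain ⟨d, hdq, hx, hy⟩ := q.exists_boundary_dart {z | D.Reachable a z} .rfl hb
  obtain ⟨⟨x, y⟩, hxy⟩ := d
  have hxy_q : s(x, y) ∈ q.edges := List.mem_map_of_mem (f := Dart.edge) hdq
  have hcut : ¬ D.Reachable x y := fun h => hy (hx.trans h)
  obtain ⟨r, hr⟩ := hT.connected.exists_isPath x y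
  have hle : edist a b ≤ edist x y :=
    hρ x y ⟨r, hr⟩ a b (r.mem_edges_of_not_reachable_deleteEdges hcut)
  have hxy' : ¬ T.Adj x y := by
    intro hT_xy
    have hxy_ab : s(x, y) = s(a, b) := by
      by_contra hne
      exact hcut (deleteEdges_adj.mpr ⟨hT_xy, hne⟩).reachable
    exact hab' (T'.mem_edgeSet.mp (hxy_ab ▸ T'.mem_edgeSet.mpr hxy))
  exact ⟨x, y, hxy, hxy', hle, hT'.deleteEdges_sup_edge_of_mem_edges ⟨q, hq⟩ hxy_q⟩

lemma RhoInftyLe.sum_le_graphLen {T T' : SimpleGraph M} (hT : T.IsTree)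
    (hρ : RhoInftyLe T) (hT' : T'.IsTree) {F : Finset (Sym2 M)} (hF : ↑F ⊆ T.edgeSet) :
    ∑ e ∈ F, edgeLen e ≤ graphLen T' := by
  -- Induction on the number of edges of `F` missing from `T'`: each exchange puts one of them
  -- into `T'` without making it longer.
  induction hn : (↑F \ T'.edgeSet).ncard using Nat.strong_induction_on generalizing T' with
  | _ n ih =>
  by_cases hFT' : ↑F ⊆ T'.edgeSet
  · exact sum_edgeLen_le_graphLen hFT'
  obtain ⟨⟨a, b⟩, habF, hab'⟩ := Set.not_subset.mp hFT'
  obtain ⟨x, y, hxy, hxy', hle, hT''⟩ := hρ.exists_exchange hT hT' (hF habF) hab'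
  set T'' := T'.deleteEdges {s(x, y)} ⊔ edge a b
  have hkept : T'.edgeSet \ {s(x, y)} ⊆ T''.edgeSet := by
    rw [edgeSet_sup, edgeSet_deleteEdges]
    exact Set.subset_union_left
  have hadded : s(a, b) ∈ T''.edgeSet :=
    Or.inr ((edge_adj ..).mpr ⟨.inl ⟨rfl, rfl⟩, (hF habF).ne⟩)
  have hcard : (↑F \ T''.edgeSet).ncard < n := by
    rw [← hn]
    refine Set.ncard_lt_ncard ((Set.ssubset_iff_of_subset ?_).mpr
      ⟨s(a, b), ⟨habF, hab'⟩, fun h => h.2 hadded⟩) (F.finite_toSet.sdiff)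
    rintro f ⟨hfF, hfT''⟩
    refine ⟨hfF, fun hfT' => hfT'' (hkept ⟨hfT', ?_⟩)⟩
    rintro rfl
    exact hxy' (hF hfF)
  calc ∑ e ∈ F, edgeLen e ≤ graphLen T'' := ih _ hcard hT'' rfl
    _ ≤ graphLen (T'.deleteEdges {s(x, y)}) + edist a b := graphLen_sup_edge_le _ _ _
    _ ≤ graphLen (T'.deleteEdges {s(x, y)}) + edist x y := by gcongr
    _ = graphLen T' := graphLen_deleteEdges_add hxy

lemma RhoInftyLe.graphLen_le {T T' : SimpleGraph M} (hT : T.IsTree) (hρ : RhoInftyLe T)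
    (hT' : T'.IsTree) : graphLen T ≤ graphLen T' :=
  graphLen_le_of_forall_sum_le fun _ hF => hρ.sum_le_graphLen hT hT' hF

end

theorem mst_iff_rho_infty_le_general [MetricSpace M] (T : SimpleGraph M) (hT : T.IsTree)
    (hfin : graphLen T < ⊤) :
    IsMST T ↔ ∀ x y : M, ∀ p : T.Path x y, ∀ a b : M,
      s(a,b) ∈ p.1.edges → edist a b ≤ edist x y :=
  ⟨IsMST.rhoInftyLe, fun hρ => ⟨hT, hfin, fun _ hT' => RhoInftyLe.graphLen_le hT hρ hT'⟩⟩

/-- A spanning tree `T` of finite length with positive edge lengths is a minimal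
spanning tree iff `ρ^T_∞ ≤ ρ`, i.e. iff every edge on the path in `T` from `x` to
`y` is not longer than `ρ(x, y)`. -/
theorem mst_iff_rho_infty_le [MetricSpace M] (T : SimpleGraph M) (hT : T.IsTree)
    (hpos : ∀ a b : M, T.Adj a b → 0 < edist a b) (hfin : graphLen T < ⊤) :
    IsMST T ↔ ∀ x y : M, ∀ p : T.Path x y, ∀ a b : M,
      s(a,b) ∈ p.1.edges → edist a b ≤ edist x y :=
  mst_iff_rho_infty_le_general T hT hfin

end MSTPaper
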